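/- For every n ≥ 2, every q ∈ ℂ with q ≠ 0, and every 1 ≤ i ≤ n − 1, the operators on V (the span of basis vectors indexed by involutions in ISₙ) satisfy P_{i+1} = P_i T_i P_i − (q − 1) P_i in End_ℂ(V). -/

import Mathlib

open Equiv

/-- The symmetric inverse semigroup `ISₙ`: partial injective maps of `{0, …, n−1}`
(modelled as partial equivalences `Fin n ≃. Fin n`), under composition of partial
maps: `(x * y)(a) = x(y(a))`. -/
abbrev ISn (n : ℕ) : Type := PEquiv (Fin n) (Fin n)

noncomputable instance ISnMonoid (n : ℕ) : Monoid (ISn n) where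
  one := PEquiv.refl (Fin n)
  mul x y := y.trans x
  mul_assoc x y z := (PEquiv.trans_assoc z y x).symm
  one_mul x := PEquiv.trans_refl x
  mul_one x := PEquiv.refl_trans x

@[simp] theorem ISn.mul_def {n : ℕ} (x y : ISn n) : x * y = y.trans x := rfl
@[simp] theorem ISn.one_def {n : ℕ} : (1 : ISn n) = PEquiv.refl (Fin n) := rfl

/-- Involutions in `ISₙ`: elements mapping their domain bijectively to itself with
`w(w(a)) = a` for all `a` in the domain; equivalently, `w.symm = w`. -/
abbrev ISInv (n : ℕ) : Type := {w : ISn n // w.symm = w}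

/-- `V`: the complex vector space with basis `{I_w : w an involution in ISₙ}`. -/
abbrev VIS (n : ℕ) : Type := ISInv n →₀ ℂ

/-- Conjugation `x w x⁻¹` of an involution `w ∈ ISₙ` by an element `x ∈ ISₙ`
(as a partial map, `a ↦ x(w(x⁻¹(a)))`; when `dom(w) ⊆ dom(x)` this is the involution
with domain `x(dom(w))` sending `x(a) ↦ x(w(a))` for `a ∈ dom(w)`). -/
def conjIS {n : ℕ} (x : ISn n) (w : ISInv n) : ISInv n :=
  ⟨(x.symm.trans w.1).trans x, by
    rw [PEquiv.symm_trans_rev, PEquiv.symm_trans_rev, PEquiv.symm_symm, w.2,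
      PEquiv.trans_assoc]⟩

/-- Conjugation `π w π⁻¹` of an involution `w ∈ ISₙ` by a permutation `π ∈ Sₙ`:
the involution with domain `π(dom(w))` sending `π(a) ↦ π(w(a))` for `a ∈ dom(w)`. -/
def conjPermIS {n : ℕ} (π : Equiv.Perm (Fin n)) (w : ISInv n) : ISInv n :=
  conjIS π.toPEquiv w

/-- The operator `T_i` on `V`.  Indices are 0-based: the parameter `i` (with
`i + 1 < n`) corresponds to the pair of points `i, i+1` of `{0, …, n−1}` (that is,
to the 1-based index `i+1` of the paper), and `s_i` is the transposition swapping
them.  On a basis vector `I_w`: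
if `i, i+1 ∈ dom(w)` then `T_i I_w` is `q I_w` if `i, i+1 ∉ supp(w)`; `−I_w` if
`i, i+1 ∈ supp(w)`; `I_{s_i w s_i}` if `i ∈ supp(w)`, `i+1 ∉ supp(w)`;
`q I_{s_i w s_i} + (q−1) I_w` if `i ∉ supp(w)`, `i+1 ∈ supp(w)`.
If `i, i+1 ∉ dom(w)` then `T_i I_w = q I_w`.  If `i ∈ dom(w)`, `i+1 ∉ dom(w)` then
`T_i I_w = I_{s_i w s_i}`.  If `i ∉ dom(w)`, `i+1 ∈ dom(w)` then
`T_i I_w = q I_{s_i w s_i} + (q−1) I_w`. -/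
noncomputable def TIS (n : ℕ) (q : ℂ) (i : ℕ) (hi : i + 1 < n) : VIS n →ₗ[ℂ] VIS n :=
  Finsupp.lift (VIS n) ℂ (ISInv n) (fun w =>
    letI a : Fin n := ⟨i, Nat.lt_of_succ_lt hi⟩
    letI b : Fin n := ⟨i + 1, hi⟩
    letI s : Equiv.Perm (Fin n) := Equiv.swap a b
    if (w.1 a).isSome then
      if (w.1 b).isSome then
        -- both `i` and `i+1` lie in `dom(w)`
        if w.1 a = some a then
          if w.1 b = some b then q • Finsupp.single w (1 : ℂ)
          else q • Finsupp.single (conjPermIS s w) (1 : ℂ) +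
            (q - 1) • Finsupp.single w (1 : ℂ)
        else
          if w.1 b = some b then Finsupp.single (conjPermIS s w) (1 : ℂ)
          else - Finsupp.single w (1 : ℂ)
      else Finsupp.single (conjPermIS s w) (1 : ℂ)
    else
      if (w.1 b).isSome then
        q • Finsupp.single (conjPermIS s w) (1 : ℂ) + (q - 1) • Finsupp.single w (1 : ℂ)
      else q • Finsupp.single w (1 : ℂ))

/-- The operator `P_i` on `V`.  Indices are 0-based: the parameter `i` (with `i < n`)
corresponds to the 1-based index `i+1` of the paper, so that the paper's condition
`dom(w) ⊆ {i+1, …, n}` becomes: every `a ∈ dom(w)` satisfies `i < a`.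
On a basis vector: `P_i I_w = I_w` if `dom(w) ⊆ {i+1, …, n}`, and `P_i I_w = 0`
otherwise. -/
noncomputable def PIS (n : ℕ) (i : ℕ) : VIS n →ₗ[ℂ] VIS n :=
  Finsupp.lift (VIS n) ℂ (ISInv n) (fun w =>
    if ∀ a : Fin n, (w.1 a).isSome → i < (a : ℕ) then Finsupp.single w (1 : ℂ) else 0)

/-- The linear map `C_π : V → V` with `C_π(I_w) = I_{π w π⁻¹}`. -/
noncomputable def CIS (n : ℕ) (π : Equiv.Perm (Fin n)) : VIS n →ₗ[ℂ] VIS n :=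
  Finsupp.lift (VIS n) ℂ (ISInv n) (fun w => Finsupp.single (conjPermIS π w) (1 : ℂ))

/-!
Both sides vanish on `I_w` unless `i ∉ dom(w)`.  In that case `P_i I_w = I_w`, and
if also `i+1 ∉ dom(w)` then `T_i I_w = q I_w`, so the right side is `q I_w - (q-1) I_w = I_w`,
matching `P_{i+1} I_w = I_w`.  If `i+1 ∈ dom(w)` then `T_i I_w = q I_{s_i w s_i} + (q-1) I_w`,
and `i ∈ dom(s_i w s_i)`, so `P_i` kills the first term and the right side is `0 = P_{i+1} I_w`.
-/

open Equiv

namespace ISInv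

variable {n : ℕ}

def DomAbove (i : ℕ) (w : ISInv n) : Prop :=
  ∀ a : Fin n, (w.1 a).isSome → i < (a : ℕ)

lemma DomAbove.not_isSome {i : ℕ} {w : ISInv n} (hw : DomAbove i w) (hi : i < n) :
    ¬ (w.1 ⟨i, hi⟩).isSome :=
  fun h => (hw _ h).false

lemma DomAbove.of_succ {i : ℕ} {w : ISInv n} (hw : DomAbove (i + 1) w) : DomAbove i w :=
  fun a ha => Nat.lt_of_succ_lt (hw a ha)

lemma DomAbove.succ {i : ℕ} {w : ISInv n} (hw : DomAbove i w) (hi : i + 1 < n)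
    (hb : ¬ (w.1 ⟨i + 1, hi⟩).isSome) : DomAbove (i + 1) w := by
  intro a ha
  have hai : (a : ℕ) ≠ i + 1 := fun h => by
    rw [show a = ⟨i + 1, hi⟩ from Fin.ext h] at ha
    exact hb ha
  have := hw a ha
  omega

end ISInv

open ISInv

lemma conjPermIS_apply {n : ℕ} (π : Perm (Fin n)) (w : ISInv n) (x : Fin n) :
    (conjPermIS π w).1 x = (w.1 (π.symm x)).map π := by
  change ((π.toPEquiv.symm x).bind w.1).bind π.toPEquiv = _
  rw [← toPEquiv_symm, toPEquiv_apply, Option.bind_some]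
  cases w.1 (π.symm x) <;> simp [toPEquiv_apply]

lemma not_domAbove_conj_swap {n i : ℕ} (hi : i + 1 < n) {w : ISInv n}
    (hb : (w.1 ⟨i + 1, hi⟩).isSome) :
    ¬ DomAbove i (conjPermIS (swap ⟨i, Nat.lt_of_succ_lt hi⟩ ⟨i + 1, hi⟩) w) := by
  intro h
  refine h.not_isSome (Nat.lt_of_succ_lt hi) ?_
  rwa [conjPermIS_apply, Option.isSome_map, symm_swap, swap_apply_left]

lemma Finsupp.lift_single_one {R M X : Type*} [Semiring R] [AddCommMonoid M] [Module R M]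
    (f : X → M) (x : X) : Finsupp.lift M R X f (Finsupp.single x 1) = f x := by
  rw [Finsupp.lift_apply, Finsupp.sum_single_index (zero_smul R (f x)), one_smul]

lemma PIS_single_of_domAbove {n i : ℕ} {w : ISInv n} (hw : DomAbove i w) :
    PIS n i (Finsupp.single w 1) = Finsupp.single w 1 :=
  (Finsupp.lift_single_one _ w).trans (if_pos hw)

lemma PIS_single_of_not_domAbove {n i : ℕ} {w : ISInv n} (hw : ¬ DomAbove i w) :
    PIS n i (Finsupp.single w 1) = 0 :=
  (Finsupp.lift_single_one _ w).trans (if_neg hw)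

section TIS

variable {n i : ℕ} (q : ℂ) (hi : i + 1 < n) {w : ISInv n}

lemma TIS_single_of_not_isSome_of_isSome (ha : ¬ (w.1 ⟨i, Nat.lt_of_succ_lt hi⟩).isSome)
    (hb : (w.1 ⟨i + 1, hi⟩).isSome) :
    TIS n q i hi (Finsupp.single w 1) =
      q • Finsupp.single (conjPermIS (swap ⟨i, Nat.lt_of_succ_lt hi⟩ ⟨i + 1, hi⟩) w) 1 +
        (q - 1) • Finsupp.single w 1 := by
  rw [TIS, Finsupp.lift_single_one]
  simp only [if_neg ha, if_pos hb]

lemma TIS_single_of_not_isSome_of_not_isSome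
    (ha : ¬ (w.1 ⟨i, Nat.lt_of_succ_lt hi⟩).isSome) (hb : ¬ (w.1 ⟨i + 1, hi⟩).isSome) :
    TIS n q i hi (Finsupp.single w 1) = q • Finsupp.single w 1 := by
  rw [TIS, Finsupp.lift_single_one]
  simp only [if_neg ha, if_neg hb]

end TIS

theorem PIS_rec_general (n : ℕ) (q : ℂ) (i : ℕ) (hi : i + 1 < n) :
    (PIS n (i + 1) : Module.End ℂ (VIS n)) =
      (PIS n i : Module.End ℂ (VIS n)) * TIS n q i hi * PIS n i - (q - 1) • PIS n i := by
  ext w : 2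
  simp only [LinearMap.comp_apply, Finsupp.lsingle_apply, LinearMap.sub_apply,
    Module.End.mul_apply, LinearMap.smul_apply]
  by_cases hw : DomAbove i w
  · have ha := hw.not_isSome (Nat.lt_of_succ_lt hi)
    rw [PIS_single_of_domAbove hw]
    by_cases hb : (w.1 ⟨i + 1, hi⟩).isSome
    · rw [TIS_single_of_not_isSome_of_isSome q hi ha hb, map_add, map_smul, map_smul,
        PIS_single_of_not_domAbove (not_domAbove_conj_swap hi hb), PIS_single_of_domAbove hw,
        PIS_single_of_not_domAbove fun h => h.not_isSome hi hb]
      module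
    · rw [TIS_single_of_not_isSome_of_not_isSome q hi ha hb, map_smul,
        PIS_single_of_domAbove hw, PIS_single_of_domAbove (hw.succ hi hb)]
      module
  · rw [PIS_single_of_not_domAbove hw, PIS_single_of_not_domAbove (mt DomAbove.of_succ hw)]
    simp

/-- `P_{i+1} = P_i T_i P_i − (q − 1) P_i` (0-based index `i` with `i + 1 < n`,
corresponding to the paper's 1-based `1 ≤ i ≤ n − 1`). -/
theorem PIS_rec (n : ℕ) (hn : 2 ≤ n) (q : ℂ) (hq : q ≠ 0) (i : ℕ) (hi : i + 1 < n) :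
    (PIS n (i + 1) : Module.End ℂ (VIS n)) =
      (PIS n i : Module.End ℂ (VIS n)) * TIS n q i hi * PIS n i - (q - 1) • PIS n i :=
  PIS_rec_general n q i hi
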